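/- arXiv:1410.3887 — 4 statements merged into one kernel-verified Lean document; each statement's English description precedes it below -/
import Mathlib

section
/- For every real y, e^{-y} + y - 1 ≥ min(y, y²)/6. -/
open Real

lemma cubic_lb {y : ℝ} (h0 : 0 ≤ y) (h1 : y ≤ 1) :
    1 - y + y ^ 2 / 2 - 2 * y ^ 3 / 9 ≤ Real.exp (-y) := by
  have hb := Real.exp_bound (x := -y) (by rw [abs_neg, abs_of_nonneg h0]; exact h1)
    (n := 3) (by norm_num)
  rw [abs_sub_le_iff] at hb
  have h2 := hb.2
  have hs : ∑ m ∈ Finset.range 3, (-y) ^ m / m.factorial = 1 - y + y ^ 2 / 2 := by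
    simp [Finset.sum_range_succ]
    ring
  rw [hs, abs_neg, abs_of_nonneg h0] at h2
  norm_num [Nat.factorial] at h2
  linarith

/-- For every real `y`, `e^{-y} + y - 1 ≥ min(y, y²)/6`. -/
theorem exp_neg_add_sub_one_ge_min_div_six (y : ℝ) :
    min y (y ^ 2) / 6 ≤ Real.exp (-y) + y - 1 := by
  rcases le_or_gt y 0 with hy | hy
  · have hmin : min y (y ^ 2) = y := min_eq_left (by nlinarith)
    rw [hmin]
    have := Real.add_one_le_exp (-y)
    linarith
  rcases le_or_gt y 1 with h1 | h1
  · have hmin : min y (y ^ 2) = y ^ 2 := min_eq_right (by nlinarith)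
    rw [hmin]
    have := cubic_lb hy.le h1
    nlinarith
  have hmin : min y (y ^ 2) = y := min_eq_left (by nlinarith)
  rw [hmin]
  rcases le_or_gt (6/5) y with h65 | h65
  · have := Real.exp_pos (-y)
    linarith
  · -- 1 < y < 6/5 : exp(-y) ≥ exp(-6/5) ≥ 1/6
    have h1 : Real.exp (-(1:ℝ)/5) ≥ 4/5 := by
      have := Real.add_one_le_exp (-(1:ℝ)/5)
      linarith
    have he : Real.exp 1 < 2.7182818286 := Real.exp_one_lt_d9
    have h2 : Real.exp (6/5 : ℝ) ≤ 6 := by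
      have : Real.exp (6/5 : ℝ) = Real.exp 1 * Real.exp (1/5) := by
        rw [← Real.exp_add]; norm_num
      have h3 : Real.exp (1/5 : ℝ) ≤ 5/4 := by
        have h4 : Real.exp (1/5 : ℝ) * Real.exp (-(1:ℝ)/5) = 1 := by
          rw [← Real.exp_add]; norm_num
        nlinarith [Real.exp_pos (1/5 : ℝ)]
      nlinarith [Real.exp_pos (1:ℝ)]
    have h5 : Real.exp (-y) ≥ 1/6 := by
      have : Real.exp (-y) ≥ Real.exp (-(6/5)) := Real.exp_le_exp.mpr (by linarith)
      have h6 : Real.exp (-(6/5 : ℝ)) * Real.exp (6/5 : ℝ) = 1 := by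
        rw [← Real.exp_add]; norm_num
      nlinarith [Real.exp_pos (-(6/5):ℝ)]
    linarith
end

section
/- Let Z be a real random variable with E[Z] = 0 and E[e^{δZ}] ≤ C for some δ > 0 and C ≥ 1. Then for any λ > 0, P(Z ≤ -λ) ≤ C·e/(δλ). More precisely, with p = P(Z ≤ -λ), one has (1-p)·exp(δλ·p/(1-p)) ≤ C, and hence p ≤ (1-p)·log(C/(1-p))/(δλ). -/
/-!
With `A = {Z ≤ -λ}` and `p = P(A)`: since `Z ≤ -λ` on `A` and `E[Z] = 0`, the integral of `Z`
over `Aᶜ` is at least `λp`. Jensen's inequality for `exp` on `Aᶜ`, a set of mass `1 - p`, then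
gives `(1 - p) · exp (δλp / (1 - p)) ≤ ∫_{Aᶜ} e^{δZ} ≤ C`. Taking logarithms gives the second
bound, and `log x ≤ x - 1` bounds `(1 - p) · log (C / (1 - p))` by `C`.
-/

open MeasureTheory Real

section
variable {α : Type*} [MeasurableSpace α] {μ : Measure α} {f : α → ℝ} {s : Set α}

theorem measureReal_mul_exp_div_le_setIntegral_exp (hs : 0 < μ.real s) (hf : IntegrableOn f s μ)
    (hef : IntegrableOn (fun x ↦ exp (f x)) s μ) :
    μ.real s * exp ((∫ x in s, f x ∂μ) / μ.real s) ≤ ∫ x in s, exp (f x) ∂μ := by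
  obtain ⟨hμs, hμs_top⟩ := ENNReal.toReal_pos_iff.mp hs
  have jensen := convexOn_exp.map_set_average_le continuous_exp.continuousOn isClosed_univ
    hμs.ne' hμs_top.ne (by simp) hf hef
  rw [setAverage_eq, setAverage_eq, smul_eq_mul, smul_eq_mul, inv_mul_eq_div, inv_mul_eq_div,
    le_div_iff₀ hs] at jensen
  linarith

theorem sub_mul_measureReal_le_setIntegral_compl [IsFiniteMeasure μ] (hs : NullMeasurableSet s μ)
    (hf : Integrable f μ) {c : ℝ} (hfs : ∀ x ∈ s, f x ≤ c) :
    ∫ x, f x ∂μ - c * μ.real s ≤ ∫ x in sᶜ, f x ∂μ := by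
  have hle : ∫ x in s, f x ∂μ ≤ c * μ.real s := by
    calc ∫ x in s, f x ∂μ ≤ ∫ _ in s, c ∂μ :=
          setIntegral_mono_ae_restrict hf.integrableOn integrableOn_const
            ((ae_restrict_mem₀ hs).mono hfs)
      _ = c * μ.real s := by rw [setIntegral_const, smul_eq_mul, mul_comm]
  linarith [integral_add_compl₀ hs hf]

theorem measureReal_setOf_le_lt_one [IsProbabilityMeasure μ] (hf : Integrable f μ) {c : ℝ}
    (hc : c < ∫ x, f x ∂μ) : μ.real {x | f x ≤ c} < 1 := by
  have hs : NullMeasurableSet {x | f x ≤ c} μ :=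
    nullMeasurableSet_le hf.aemeasurable aemeasurable_const
  refine measureReal_le_one.lt_of_ne fun h ↦ hc.not_ge ?_
  have hcompl : μ {x | f x ≤ c}ᶜ = 0 := by
    rw [prob_compl_eq_one_sub₀ hs, ← ofReal_measureReal, h]; simp
  have := sub_mul_measureReal_le_setIntegral_compl hs hf fun _ hx ↦ hx
  rw [setIntegral_measure_zero _ hcompl, h] at this
  linarith

theorem one_sub_mul_exp_le_integral_exp [IsProbabilityMeasure μ] (hf : Integrable f μ)
    (hmean : ∫ x, f x ∂μ = 0) {δ lam : ℝ} (hδ : 0 ≤ δ)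
    (hef : Integrable (fun x ↦ exp (δ * f x)) μ) (hlam : 0 < lam) :
    (1 - μ.real {x | f x ≤ -lam}) *
        exp (δ * lam * μ.real {x | f x ≤ -lam} / (1 - μ.real {x | f x ≤ -lam})) ≤
      ∫ x, exp (δ * f x) ∂μ := by
  set s := {x | f x ≤ -lam}
  have hs : NullMeasurableSet s μ :=
    nullMeasurableSet_le hf.aemeasurable aemeasurable_const
  have hcompl : μ.real sᶜ = 1 - μ.real s := by rw [measureReal_compl₀ hs, probReal_univ]
  have hcompl_pos : 0 < μ.real sᶜ :=
    hcompl ▸ sub_pos.2 (measureReal_setOf_le_lt_one hf (by linarith))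
  have htail : lam * μ.real s ≤ ∫ x in sᶜ, f x ∂μ := by
    simpa [hmean] using sub_mul_measureReal_le_setIntegral_compl hs hf (c := -lam) fun _ hx ↦ hx
  rw [← hcompl]
  calc μ.real sᶜ * exp (δ * lam * μ.real s / μ.real sᶜ)
      ≤ μ.real sᶜ * exp ((∫ x in sᶜ, δ * f x ∂μ) / μ.real sᶜ) := by
        rw [integral_const_mul, mul_assoc]
        gcongr
    _ ≤ ∫ x in sᶜ, exp (δ * f x) ∂μ :=
        measureReal_mul_exp_div_le_setIntegral_exp hcompl_pos (hf.const_mul δ).integrableOn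
          hef.integrableOn
    _ ≤ ∫ x, exp (δ * f x) ∂μ := setIntegral_le_integral hef (ae_of_all _ fun _ ↦ (exp_pos _).le)

end

theorem le_mul_log_div_of_mul_exp_le {p q a C : ℝ} (hq : 0 < q) (ha : 0 < a)
    (h : q * exp (a * p / q) ≤ C) : p ≤ q * log (C / q) / a := by
  have hC : 0 < C := (mul_pos hq (exp_pos _)).trans_le h
  have hlog : a * p / q ≤ log (C / q) :=
    (le_log_iff_exp_le (div_pos hC hq)).2 ((le_div_iff₀' hq).2 h)
  rw [div_le_iff₀ hq] at hlog
  rw [le_div_iff₀ ha]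
  linarith

theorem mul_log_div_le_sub {q C : ℝ} (hq : 0 < q) (hC : 0 < C) : q * log (C / q) ≤ C - q :=
  calc q * log (C / q) ≤ q * (C / q - 1) := by gcongr; exact log_le_sub_one_of_pos (div_pos hC hq)
    _ = C - q := by field_simp

theorem exp_moment_lower_tail_general {Ω : Type*} [MeasurableSpace Ω] (P : Measure Ω)
    [IsProbabilityMeasure P] (Z : Ω → ℝ)
    (hZint : Integrable Z P) (hZmean : ∫ ω, Z ω ∂P = 0)
    (δ C : ℝ) (hδ : 0 < δ)
    (hexpint : Integrable (fun ω => Real.exp (δ * Z ω)) P)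
    (hexp : ∫ ω, Real.exp (δ * Z ω) ∂P ≤ C)
    (lam : ℝ) (hlam : 0 < lam) :
    (1 - (P {ω | Z ω ≤ -lam}).toReal) *
        Real.exp (δ * lam * (P {ω | Z ω ≤ -lam}).toReal /
          (1 - (P {ω | Z ω ≤ -lam}).toReal)) ≤ C ∧
      (P {ω | Z ω ≤ -lam}).toReal ≤
        (1 - (P {ω | Z ω ≤ -lam}).toReal) *
          Real.log (C / (1 - (P {ω | Z ω ≤ -lam}).toReal)) / (δ * lam) ∧
      (P {ω | Z ω ≤ -lam}).toReal ≤ C * Real.exp 1 / (δ * lam) := by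
  simp only [← measureReal_def]
  set p := P.real {ω | Z ω ≤ -lam}
  have hq : 0 < 1 - p := sub_pos.2 (measureReal_setOf_le_lt_one hZint (by linarith))
  have hδlam : 0 < δ * lam := mul_pos hδ hlam
  have hjensen : (1 - p) * exp (δ * lam * p / (1 - p)) ≤ C :=
    (one_sub_mul_exp_le_integral_exp hZint hZmean hδ.le hexpint hlam).trans hexp
  have hlog := le_mul_log_div_of_mul_exp_le hq hδlam hjensen
  have hC : 0 < C := (mul_pos hq (exp_pos _)).trans_le hjensen
  refine ⟨hjensen, hlog, hlog.trans (div_le_div_of_nonneg_right ?_ hδlam.le)⟩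
  calc (1 - p) * log (C / (1 - p)) ≤ C - (1 - p) := mul_log_div_le_sub hq hC
    _ ≤ C * exp 1 := by nlinarith [add_one_le_exp 1]

/-- If `E[Z] = 0` and `E[e^{δZ}] ≤ C` for some `δ > 0`, `C ≥ 1`, then for `λ > 0`, writing
`p = P(Z ≤ -λ)`: `(1-p)·exp(δλ·p/(1-p)) ≤ C`, hence `p ≤ (1-p)·log(C/(1-p))/(δλ)`, and
`p ≤ C·e/(δλ)`. -/
theorem exp_moment_lower_tail {Ω : Type*} [MeasurableSpace Ω] (P : Measure Ω)
    [IsProbabilityMeasure P] (Z : Ω → ℝ) (hZmeas : Measurable Z)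
    (hZint : Integrable Z P) (hZmean : ∫ ω, Z ω ∂P = 0)
    (δ C : ℝ) (hδ : 0 < δ) (hC : 1 ≤ C)
    (hexpint : Integrable (fun ω => Real.exp (δ * Z ω)) P)
    (hexp : ∫ ω, Real.exp (δ * Z ω) ∂P ≤ C)
    (lam : ℝ) (hlam : 0 < lam) :
    (1 - (P {ω | Z ω ≤ -lam}).toReal) *
        Real.exp (δ * lam * (P {ω | Z ω ≤ -lam}).toReal /
          (1 - (P {ω | Z ω ≤ -lam}).toReal)) ≤ C ∧
      (P {ω | Z ω ≤ -lam}).toReal ≤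
        (1 - (P {ω | Z ω ≤ -lam}).toReal) *
          Real.log (C / (1 - (P {ω | Z ω ≤ -lam}).toReal)) / (δ * lam) ∧
      (P {ω | Z ω ≤ -lam}).toReal ≤ C * Real.exp 1 / (δ * lam) :=
  exp_moment_lower_tail_general P Z hZint hZmean δ C hδ hexpint hexp lam hlam
end

section
/- Let Z' be a real random variable with E[Z'] = 0 and E[e^{Z'}] ≤ K for some K ≥ 1. Then for any event A with q = P(A) > 0, E[Z' | A] ≥ -6·max((K-1)/q, √((K-1)/q)). -/
/-!
Jensen's inequality for the convex function `φ(x) = e^x - x - 1 ≥ 0`, applied on `A`, gives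
`φ(m) ≤ (1/q) ∫_A φ(Z) ≤ (1/q) E[φ(Z)] ≤ (K - 1)/q` for the conditional mean `m = E[Z | A]`.
Since `φ(-y) ≥ min(y, y²)/6`, a negative `m` can only be as small as `-6 max(c, √c)`, `c = (K - 1)/q`.
-/

open MeasureTheory Real

lemma min_div_six_le_exp_neg_add_sub_one (y : ℝ) : min y (y ^ 2) / 6 ≤ exp (-y) + y - 1 := by
  rcases le_or_gt y (6 / 5) with hy | hy
  -- `(1 - y/3)³ + y - 1 = y²/3 - y³/27`, which is at least `y²/6` for `y ≤ 9/2`.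
  · have h_cube : (1 - y / 3) ^ 3 ≤ exp (-y) := by
      calc (1 - y / 3) ^ 3 ≤ exp (-(y / 3)) ^ 3 :=
            pow_le_pow_left₀ (by linarith) (by linarith [add_one_le_exp (-(y / 3))]) 3
        _ = exp (-y) := by rw [← exp_nat_mul]; ring_nf
    nlinarith [min_le_right y (y ^ 2), sq_nonneg y]
  · linarith [min_le_left y (y ^ 2), exp_pos (-y)]

lemma neg_six_mul_max_le_of_exp_sub_sub_one_le {m c : ℝ} (h : exp m - m - 1 ≤ c) :
    -(6 * max c √c) ≤ m := by
  rcases le_or_gt 0 m with hm | hm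
  · linarith [le_max_of_le_right (b := c) (sqrt_nonneg c)]
  have h_min : min (-m) ((-m) ^ 2) / 6 ≤ c := by
    have := min_div_six_le_exp_neg_add_sub_one (-m)
    rw [neg_neg] at this
    linarith
  rcases le_total (-m) ((-m) ^ 2) with h_le | h_le
  · rw [min_eq_left h_le] at h_min
    linarith [le_max_left c √c]
  · rw [min_eq_right h_le] at h_min
    have : -m / 6 ≤ √c := (le_sqrt' (by linarith)).2 (by nlinarith)
    linarith [le_max_right c √c]

lemma convexOn_exp_sub_sub_one : ConvexOn ℝ Set.univ fun x => exp x - x - 1 := by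
  have h_eq : (fun x => exp x - x - 1) = exp - (id + fun _ => 1) := by
    funext x
    simp only [Pi.sub_apply, Pi.add_apply, id_eq]
    ring
  rw [h_eq]
  exact convexOn_exp.sub ((concaveOn_id convex_univ).add_const 1)

lemma exp_setAverage_sub_sub_one_le {α : Type*} [MeasurableSpace α] {μ : Measure α} {s : Set α}
    {f : α → ℝ} (h0 : μ s ≠ 0) (hs : μ s ≠ ⊤) (hf : IntegrableOn f s μ)
    (hexp : IntegrableOn (fun x => exp (f x)) s μ) :
    exp (⨍ x in s, f x ∂μ) - ⨍ x in s, f x ∂μ - 1 ≤ ⨍ x in s, (exp (f x) - f x - 1) ∂μ :=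
  convexOn_exp_sub_sub_one.map_set_average_le (by fun_prop) isClosed_univ h0 hs
    (ae_of_all _ fun _ => Set.mem_univ _) hf ((hexp.sub hf).sub (integrableOn_const hs))

lemma setIntegral_exp_sub_sub_one_le {α : Type*} [MeasurableSpace α] {μ : Measure α}
    [IsProbabilityMeasure μ] (s : Set α) {f : α → ℝ} (hf : Integrable f μ)
    (hexp : Integrable (fun x => exp (f x)) μ) :
    ∫ x in s, (exp (f x) - f x - 1) ∂μ ≤ ∫ x, exp (f x) ∂μ - ∫ x, f x ∂μ - 1 := by
  have h_int : Integrable (fun x => exp (f x) - f x) μ := hexp.sub hf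
  calc ∫ x in s, (exp (f x) - f x - 1) ∂μ ≤ ∫ x, (exp (f x) - f x - 1) ∂μ :=
        setIntegral_le_integral (h_int.sub (integrable_const 1))
          (ae_of_all _ fun x => by dsimp; linarith [add_one_le_exp (f x)])
    _ = ∫ x, exp (f x) ∂μ - ∫ x, f x ∂μ - 1 := by
        rw [integral_sub h_int (integrable_const 1), integral_sub hexp hf, integral_const,
          probReal_univ, one_smul]

theorem cond_exp_lower_bound_of_exp_moment_general {Ω : Type*} [MeasurableSpace Ω] (P : Measure Ω)
    [IsProbabilityMeasure P] (Z : Ω → ℝ)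
    (hZint : Integrable Z P) (hZmean : ∫ ω, Z ω ∂P = 0)
    (K : ℝ)
    (hexpint : Integrable (fun ω => Real.exp (Z ω)) P)
    (hexp : ∫ ω, Real.exp (Z ω) ∂P ≤ K)
    (A : Set Ω) (hq : 0 < (P A).toReal) :
    -(6 * max ((K - 1) / (P A).toReal) (Real.sqrt ((K - 1) / (P A).toReal))) ≤
      (∫ ω in A, Z ω ∂P) / (P A).toReal := by
  have h_avg (g : Ω → ℝ) : ⨍ ω in A, g ω ∂P = (∫ ω in A, g ω ∂P) / (P A).toReal := by
    rw [setAverage_eq, smul_eq_mul, inv_mul_eq_div, measureReal_def]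
  have hA0 : P A ≠ 0 := fun h => by simp [h] at hq
  apply neg_six_mul_max_le_of_exp_sub_sub_one_le
  rw [← h_avg]
  calc exp (⨍ ω in A, Z ω ∂P) - ⨍ ω in A, Z ω ∂P - 1
      ≤ ⨍ ω in A, (exp (Z ω) - Z ω - 1) ∂P :=
        exp_setAverage_sub_sub_one_le hA0 (measure_ne_top P A) hZint.integrableOn
          hexpint.integrableOn
    _ ≤ (K - 1) / (P A).toReal := by
        rw [h_avg]
        refine div_le_div_of_nonneg_right ?_ hq.le
        linarith [setIntegral_exp_sub_sub_one_le A hZint hexpint]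

/-- If `E[Z'] = 0` and `E[e^{Z'}] ≤ K` with `K ≥ 1`, then for any event `A` with
`q = P(A) > 0`, `E[Z' | A] ≥ -6·max((K-1)/q, √((K-1)/q))`. -/
theorem cond_exp_lower_bound_of_exp_moment {Ω : Type*} [MeasurableSpace Ω] (P : Measure Ω)
    [IsProbabilityMeasure P] (Z : Ω → ℝ) (hZmeas : Measurable Z)
    (hZint : Integrable Z P) (hZmean : ∫ ω, Z ω ∂P = 0)
    (K : ℝ) (hK : 1 ≤ K)
    (hexpint : Integrable (fun ω => Real.exp (Z ω)) P)
    (hexp : ∫ ω, Real.exp (Z ω) ∂P ≤ K)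
    (A : Set Ω) (hA : MeasurableSet A) (hq : 0 < (P A).toReal) :
    -(6 * max ((K - 1) / (P A).toReal) (Real.sqrt ((K - 1) / (P A).toReal))) ≤
      (∫ ω in A, Z ω ∂P) / (P A).toReal :=
  cond_exp_lower_bound_of_exp_moment_general P Z hZint hZmean K hexpint hexp A hq
end

section
/- Modified log-Sobolev inequality on the discrete cube: for any f : {-1,1}ⁿ → ℝ₊ with ∫ f dμ = 1 (μ uniform), the relative entropy satisfies H_μ(f) = ∫ f log f dμ ≤ Σ_{i=1}ⁿ ∫ (∂_i f)² / f dμ, where ∂_i f(x) = (f(x | x_i = 1) - f(x | x_i = -1))/2. -/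
/-!
Tensorization: split off the first coordinate, writing `f = (a, b)` with `a, b` functions on the
cube of one dimension less. The two-point inequality
`a log a + b log b ≤ (a + b) log ((a + b) / 2) + (a - b)² / (a + b)` (relative entropy is
bounded by the χ²-divergence, i.e. `log t ≤ t - 1`) controls the entropy of `f` by that of
`a + b` plus a first-coordinate term, the induction hypothesis handles `a + b`, and the joint
convexity of `(u, a) ↦ u² / a` splits its Fisher information into those of `a` and `b`.
-/

open Finset Real

theorem add_sq_div_add_le {a b : ℝ} (u v : ℝ) (ha : 0 < a) (hb : 0 < b) :
    (u + v) ^ 2 / (a + b) ≤ u ^ 2 / a + v ^ 2 / b := by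
  rw [div_add_div _ _ ha.ne' hb.ne', div_le_div_iff₀ (by positivity) (by positivity)]
  nlinarith [sq_nonneg (u * b - v * a)]

theorem mul_log_add_mul_log_le {a b : ℝ} (ha : 0 < a) (hb : 0 < b) :
    a * log a + b * log b ≤ (a + b) * log ((a + b) / 2) + (a - b) ^ 2 / (a + b) := by
  set m := (a + b) / 2
  have hm : 0 < m := by positivity
  have key : ∀ {x : ℝ}, 0 < x → x * log x ≤ x * (x / m - 1) + x * log m := fun {x} hx => by
    have := mul_le_mul_of_nonneg_left (log_le_sub_one_of_pos (div_pos hx hm)) hx.le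
    rw [log_div hx.ne' hm.ne'] at this
    linarith
  have hchi : a * (a / m - 1) + b * (b / m - 1) = (a - b) ^ 2 / (a + b) := by
    simp only [m]; field_simp; ring
  linarith [key ha, key hb]

namespace BoolCube

variable {n : ℕ}

/-- `2 ^ n` times `𝔼 f log f - 𝔼 f log 𝔼 f` under the uniform measure; `fisherInfo` is likewise
`2 ^ n` times `Σᵢ 𝔼 (∂ᵢ f)² / f`. -/
noncomputable def entropy (f : (Fin n → Bool) → ℝ) : ℝ :=
  ∑ x, f x * log (f x) - (∑ x, f x) * log ((∑ x, f x) / 2 ^ n)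

noncomputable def fisherInfo (f : (Fin n → Bool) → ℝ) : ℝ :=
  ∑ i, ∑ x, ((f (Function.update x i true) - f (Function.update x i false)) / 2) ^ 2 / f x

theorem sum_succ (g : (Fin (n + 1) → Bool) → ℝ) :
    ∑ x, g x = ∑ y, (g (Fin.cons true y) + g (Fin.cons false y)) := by
  rw [← (Fin.consEquiv fun _ => Bool).sum_comp g, Fintype.sum_prod_type, sum_comm]
  simp [Fin.consEquiv]

theorem fisherInfo_succ (f : (Fin (n + 1) → Bool) → ℝ) :
    fisherInfo f =
      ∑ y, (((f (Fin.cons true y) - f (Fin.cons false y)) / 2) ^ 2 / f (Fin.cons true y)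
          + ((f (Fin.cons true y) - f (Fin.cons false y)) / 2) ^ 2 / f (Fin.cons false y))
      + fisherInfo (fun y => f (Fin.cons true y)) + fisherInfo (fun y => f (Fin.cons false y)) := by
  rw [fisherInfo, Fin.sum_univ_succ, add_assoc, fisherInfo, fisherInfo, ← sum_add_distrib]
  congr 1
  · rw [sum_succ]
    simp only [Fin.update_cons_zero]
  · refine sum_congr rfl fun j _ => ?_
    rw [sum_succ, ← sum_add_distrib]
    simp only [← Fin.cons_update]

theorem fisherInfo_add_le {f g : (Fin n → Bool) → ℝ} (hf : ∀ x, 0 < f x) (hg : ∀ x, 0 < g x) :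
    fisherInfo (f + g) ≤ fisherInfo f + fisherInfo g := by
  unfold fisherInfo
  rw [← sum_add_distrib]
  refine sum_le_sum fun i _ => ?_
  rw [← sum_add_distrib]
  refine sum_le_sum fun x _ => ?_
  refine Eq.trans_le ?_ (add_sq_div_add_le _ _ (hf x) (hg x))
  simp only [Pi.add_apply]
  ring

theorem entropy_succ_le (f : (Fin (n + 1) → Bool) → ℝ) (hf : ∀ x, 0 < f x) :
    entropy f ≤ entropy (fun y => f (Fin.cons true y) + f (Fin.cons false y))
      + ∑ y, (f (Fin.cons true y) - f (Fin.cons false y)) ^ 2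
          / (f (Fin.cons true y) + f (Fin.cons false y)) := by
  set a := fun y => f (Fin.cons true y)
  set b := fun y => f (Fin.cons false y)
  have hmass : ∑ x, f x = ∑ y, (a y + b y) := sum_succ f
  have hmass_pos : 0 < ∑ y, (a y + b y) := by
    rw [← hmass]; exact sum_pos (fun x _ => hf x) univ_nonempty
  have htwo_point : ∑ x, f x * log (f x) ≤ ∑ y, (a y + b y) * log (a y + b y)
      - (∑ y, (a y + b y)) * log 2 + ∑ y, (a y - b y) ^ 2 / (a y + b y) := by
    rw [sum_succ (fun x => f x * log (f x)), sum_mul, ← sum_sub_distrib, ← sum_add_distrib]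
    refine sum_le_sum fun y _ => ?_
    have := mul_log_add_mul_log_le (hf (Fin.cons true y)) (hf (Fin.cons false y))
    rw [log_div (add_pos (hf _) (hf _)).ne' two_ne_zero] at this
    linarith
  rw [entropy, entropy, hmass, pow_succ, ← div_div,
    log_div (div_pos hmass_pos (by positivity)).ne' two_ne_zero]
  linarith

theorem entropy_le_fisherInfo (f : (Fin n → Bool) → ℝ) (hf : ∀ x, 0 < f x) :
    entropy f ≤ fisherInfo f := by
  induction n with
  | zero => simp [entropy, fisherInfo]
  | succ n ih =>
    set a := fun y => f (Fin.cons true y)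
    set b := fun y => f (Fin.cons false y)
    have ha : ∀ y, 0 < a y := fun y => hf _
    have hb : ∀ y, 0 < b y := fun y => hf _
    calc entropy f ≤ entropy (a + b) + ∑ y, (a y - b y) ^ 2 / (a y + b y) :=
          entropy_succ_le f hf
      _ ≤ fisherInfo (a + b)
            + ∑ y, (((a y - b y) / 2) ^ 2 / a y + ((a y - b y) / 2) ^ 2 / b y) := by
        gcongr with y
        · exact ih _ fun y => add_pos (ha y) (hb y)
        · exact Eq.trans_le (by ring) (add_sq_div_add_le _ _ (ha y) (hb y))
      _ ≤ fisherInfo f := by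
        rw [fisherInfo_succ f]
        linarith [fisherInfo_add_le ha hb]

end BoolCube

/-- Modified log-Sobolev inequality on the discrete cube `{-1,1}ⁿ` (coordinates encoded
by `Bool`): for strictly positive `f` with mean 1 under the uniform measure,
`∫ f log f dμ ≤ Σᵢ ∫ (∂ᵢ f)²/f dμ` where `∂ᵢ f(x) = (f(x|xᵢ=1) - f(x|xᵢ=-1))/2`. -/
theorem modified_log_sobolev_cube (n : ℕ) (f : (Fin n → Bool) → ℝ)
    (hpos : ∀ x, 0 < f x)
    (hmean : (∑ x : Fin n → Bool, f x) / 2 ^ n = 1) :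
    (∑ x : Fin n → Bool, f x * Real.log (f x)) / 2 ^ n ≤
      ∑ i : Fin n, (∑ x : Fin n → Bool,
        ((f (Function.update x i true) - f (Function.update x i false)) / 2) ^ 2 / f x)
          / 2 ^ n := by
  have h := BoolCube.entropy_le_fisherInfo f hpos
  rw [BoolCube.entropy, hmean, log_one, mul_zero, sub_zero] at h
  rw [← sum_div]
  exact div_le_div_of_nonneg_right h (by positivity)
end
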